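/- arXiv:1605.09609 — 4 statements merged into one kernel-verified Lean document; each statement's English description precedes it below -/
import Mathlib

section
/- Let n ≥ 3 and let κ₁ ≤ κ₂ ≤ … ≤ κₙ be real numbers with H := κ₁ + … + κₙ > 0. If Σᵢ κᵢ² < H²/(n−1), then κ₁ + κ₂ ≥ H/(2(n−1)); that is, the cylindrical estimate implies uniform two-convexity. -/
/-! Drop κ₁ and κ₂: Cauchy–Schwarz on the remaining n − 2 curvatures, together with
κ₁² + κ₂² ≥ (κ₁ + κ₂)²/2, bounds (H − s)² + (n − 2)s²/2 by (n − 2)Σκᵢ², where s = κ₁ + κ₂.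
The cylindrical estimate makes this less than (n − 2)H²/(n − 1), and that quadratic inequality
in s fails for every s < H/(2(n − 1)). -/

open Finset

lemma sq_sum_sub_pair_le {ι : Type*} [Fintype ι] [DecidableEq ι] {i j : ι} (hij : i ≠ j)
    (f : ι → ℝ) :
    (∑ k, f k - f i - f j) ^ 2 ≤
      ((Fintype.card ι : ℝ) - 2) * (∑ k, f k ^ 2 - f i ^ 2 - f j ^ 2) := by
  have hcard : ((({i, j} : Finset ι)ᶜ.card : ℕ) : ℝ) = (Fintype.card ι : ℝ) - 2 := by
    rw [card_compl, card_pair hij,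
      Nat.cast_sub (Fintype.one_lt_card_iff_nontrivial.mpr ⟨i, j, hij⟩), Nat.cast_two]
  have hsplit (g : ι → ℝ) : ∑ k ∈ ({i, j} : Finset ι)ᶜ, g k = ∑ k, g k - g i - g j := by
    rw [← sum_compl_add_sum {i, j}, sum_pair hij]
    ring
  simpa only [hsplit, hcard] using sq_sum_le_card_mul_sum_sq (s := ({i, j} : Finset ι)ᶜ) (f := f)

lemma two_convex_of_cylindrical {H Q a b m : ℝ} (hH : 0 < H) (hm : 1 ≤ m)
    (hrest : (H - a - b) ^ 2 ≤ (m - 1) * (Q - a ^ 2 - b ^ 2)) (hcyl : Q < H ^ 2 / m) :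
    H / (2 * m) ≤ a + b := by
  have hm0 : 0 < m := by linarith
  rw [lt_div_iff₀ hm0] at hcyl
  rw [div_le_iff₀ (by positivity)]
  set s := a + b
  have hs : s ^ 2 ≤ 2 * (a ^ 2 + b ^ 2) := by nlinarith [sq_nonneg (a - b)]
  have hquad : m * (H - s) ^ 2 + (m - 1) * m * s ^ 2 / 2 ≤ (m - 1) * H ^ 2 := by
    nlinarith [mul_le_mul_of_nonneg_left hrest hm0.le,
      mul_le_mul_of_nonneg_left hs (mul_nonneg (sub_nonneg.2 hm) hm0.le),
      mul_le_mul_of_nonneg_left hcyl.le (sub_nonneg.2 hm)]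
  by_contra! h
  set t := H - s * (2 * m)
  have ht : 0 < t := by linarith
  -- Substituting s = (H - t)/(2m) turns the slack in `hquad` into minus a sum of positive terms.
  have key : 8 * m * ((m - 1) * H ^ 2 - m * (H - s) ^ 2 - (m - 1) * m * s ^ 2 / 2)
      = -(8 * m * H * t + (m + 1) * (H - t) ^ 2) := by
    simp only [t]
    ring
  have hpos : 0 < 8 * m * H * t + (m + 1) * (H - t) ^ 2 := by positivity
  linarith [mul_nonneg (by positivity : (0 : ℝ) ≤ 8 * m) (sub_nonneg.2 hquad)]

/-- for n ≥ 3 the cylindrical estimate Σκᵢ² < H²/(n−1), H > 0, implies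
uniform two-convexity κ₁ + κ₂ ≥ H/(2(n−1)). -/
theorem stmt_3 (n : ℕ) (hn : 3 ≤ n) (κ : Fin n → ℝ)
    (hH : 0 < ∑ i, κ i)
    (hcyl : (∑ i, κ i ^ 2) < (∑ i, κ i) ^ 2 / ((n : ℝ) - 1)) :
    κ ⟨0, by omega⟩ + κ ⟨1, by omega⟩ ≥ (∑ i, κ i) / (2 * ((n : ℝ) - 1)) := by
  have hrest := sq_sum_sub_pair_le (i := (⟨0, by omega⟩ : Fin n)) (j := ⟨1, by omega⟩)
    (by simp [Fin.ext_iff]) κ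
  rw [Fintype.card_fin, show (n : ℝ) - 2 = (n - 1) - 1 by ring] at hrest
  have hn1 : (1 : ℝ) ≤ n - 1 := by
    have : (3 : ℝ) ≤ n := by exact_mod_cast hn
    linarith
  exact two_convex_of_cylindrical hH hn1 hrest hcyl
end

section
/- Let h₁ ≥ 0 and C₁ > 0 and let h : [0, ℓ] → ℝ be a differentiable function with h(0) ≤ h₁ and h(ℓ) =: h₀ ≥ 2·h₁. Suppose that whenever h(s) ≥ h₁ one has h'(s) ≤ √(4·C₁·h(s)). Then ℓ ≥ √(h₀/(16·C₁)). -/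
/-!
On the last stretch `[s₁, ℓ]` on which `h ≥ h₁`, the bound `h' ≤ √(4 C₁ h)` says exactly that
`(√h)' ≤ √C₁`, so the mean value theorem gives `√h₀ - √h₁ ≤ √C₁ ℓ`. Since `h₁ ≤ h₀ / 2`,
`√h₁ ≤ (3/4) √h₀`, whence `√h₀ ≤ 4 √C₁ ℓ`.
-/

open Set

theorem exists_last_le_of_continuousOn {f : ℝ → ℝ} {a b c : ℝ} (hab : a ≤ b)
    (hf : ContinuousOn f (Icc a b)) (ha : f a ≤ c) :
    ∃ t ∈ Icc a b, f t ≤ c ∧ ∀ s ∈ Ioc t b, c < f s := by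
  have hclosed : IsClosed (Icc a b ∩ f ⁻¹' Iic c) :=
    hf.preimage_isClosed_of_isClosed isClosed_Icc isClosed_Iic
  obtain ⟨t, ⟨ht, htc⟩, hmax⟩ :=
    (isCompact_Icc.of_isClosed_subset hclosed inter_subset_left).exists_isGreatest
      ⟨a, ⟨left_mem_Icc.2 hab, ha⟩⟩
  refine ⟨t, ht, htc, fun s hs => lt_of_not_ge fun hsc => ?_⟩
  exact (hmax ⟨⟨ht.1.trans hs.1.le, hs.2⟩, hsc⟩).not_gt hs.1

theorem sqrt_sub_sqrt_le_of_hasDerivAt_le_sqrt {f f' : ℝ → ℝ} {a b C : ℝ} (hC : 0 ≤ C)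
    (hab : a ≤ b) (hf : ∀ x ∈ Icc a b, HasDerivAt f (f' x) x)
    (hpos : ∀ x ∈ Ioo a b, 0 < f x) (hf' : ∀ x ∈ Ioo a b, f' x ≤ √(4 * C * f x)) :
    √(f b) - √(f a) ≤ √C * (b - a) := by
  rcases hab.eq_or_lt with rfl | hlt
  · simp
  have hcont : ContinuousOn (fun x => √(f x)) (Icc a b) :=
    ContinuousOn.sqrt fun x hx => (hf x hx).continuousAt.continuousWithinAt
  obtain ⟨ξ, hξ, hslope⟩ := exists_hasDerivAt_eq_slope (fun x => √(f x))
    (fun x => f' x / (2 * √(f x))) hlt hcont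
    (fun x hx => (hf x (Ioo_subset_Icc_self hx)).sqrt (hpos x hx).ne')
  have hsqrt_pos : 0 < √(f ξ) := Real.sqrt_pos.2 (hpos ξ hξ)
  have hderiv_le : f' ξ / (2 * √(f ξ)) ≤ √C := by
    rw [div_le_iff₀ (by positivity)]
    calc f' ξ ≤ √(4 * C * f ξ) := hf' ξ hξ
      _ = √C * (2 * √(f ξ)) := by
        rw [Real.sqrt_mul (by positivity), Real.sqrt_mul (by norm_num),
          show (4 : ℝ) = 2 ^ 2 by norm_num, Real.sqrt_sq (by norm_num)]
        ring
  rw [hslope, div_le_iff₀ (sub_pos.2 hlt)] at hderiv_le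
  exact hderiv_le

theorem sqrt_div_le_of_sqrt_le_sqrt_add_mul {h₀ h₁ C ℓ : ℝ} (hh₁ : 0 ≤ h₁) (hC : 0 < C)
    (hh₀ : 2 * h₁ ≤ h₀) (hsqrt : √h₀ ≤ √h₁ + √C * ℓ) : √(h₀ / (16 * C)) ≤ ℓ := by
  have hh₁_le : √h₁ ≤ 3 / 4 * √h₀ := by
    calc √h₁ ≤ √((3 / 4) ^ 2 * h₀) := Real.sqrt_le_sqrt (by linarith)
      _ = 3 / 4 * √h₀ := by
        rw [Real.sqrt_mul (by positivity), Real.sqrt_sq (by norm_num)]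
  have hC_pos : 0 < √C := Real.sqrt_pos.2 hC
  rw [Real.sqrt_div' _ (by positivity), Real.sqrt_mul (by norm_num),
    show (16 : ℝ) = 4 ^ 2 by norm_num, Real.sqrt_sq (by norm_num),
    div_le_iff₀ (by positivity)]
  linarith

/-- the mean-value/integration argument behind the girth estimate:
if h(0) ≤ h₁, h(ℓ) = h₀ ≥ 2h₁ and h' ≤ √(4C₁h) wherever h ≥ h₁ on [0,ℓ], then
ℓ ≥ √(h₀/(16C₁)). -/
theorem stmt_7 (h₁ C₁ ℓ h₀ : ℝ) (hh₁ : 0 ≤ h₁) (hC₁ : 0 < C₁) (hℓ : 0 ≤ ℓ)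
    (h h' : ℝ → ℝ)
    (hderiv : ∀ s ∈ Set.Icc (0:ℝ) ℓ, HasDerivAt h (h' s) s)
    (h0 : h 0 ≤ h₁) (hend : h ℓ = h₀) (hh₀ : 2 * h₁ ≤ h₀)
    (hbound : ∀ s ∈ Set.Icc (0:ℝ) ℓ, h₁ ≤ h s → h' s ≤ Real.sqrt (4 * C₁ * h s)) :
    Real.sqrt (h₀ / (16 * C₁)) ≤ ℓ := by
  obtain ⟨s₁, hs₁, hs₁_le, hgt⟩ := exists_last_le_of_continuousOn hℓ
    (fun s hs => (hderiv s hs).continuousAt.continuousWithinAt) h0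
  have hsub : Icc s₁ ℓ ⊆ Icc 0 ℓ := Icc_subset_Icc_left hs₁.1
  have hgrowth := sqrt_sub_sqrt_le_of_hasDerivAt_le_sqrt hC₁.le hs₁.2
    (fun s hs => hderiv s (hsub hs))
    (fun s hs => hh₁.trans_lt (hgt s (Ioo_subset_Ioc_self hs)))
    (fun s hs => hbound s (hsub (Ioo_subset_Icc_self hs)) (hgt s (Ioo_subset_Ioc_self hs)).le)
  refine sqrt_div_le_of_sqrt_le_sqrt_add_mul hh₁ hC₁ hh₀ ?_
  rw [← hend]
  calc √(h ℓ) ≤ √(h s₁) + √C₁ * (ℓ - s₁) := by linarith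
    _ ≤ √h₁ + √C₁ * ℓ := by
      gcongr
      linarith [hs₁.1]
end

section
/- Let n ≥ 3 and f(z) := (Σ_{1≤i<j≤n} 1/(zᵢ+zⱼ))⁻¹ be the two-harmonic mean on the cone {zᵢ+zⱼ > 0}. Then the function f_* : Γⁿ⁻¹₊ → ℝ defined by f_*(w₂,…,wₙ) := f(0, 1/w₂, …, 1/wₙ)⁻¹ is concave on the open positive cone Γⁿ⁻¹₊ ⊂ ℝⁿ⁻¹. Explicitly, f(0, z₂, …, zₙ)⁻¹ = Σ_{i=2}ⁿ 1/zᵢ + Σ_{1<i<j} 1/(zᵢ+zⱼ), and therefore f_*(w₂,…,wₙ) = Σ_{i=2}ⁿ wᵢ + Σ_{1<i<j} (wᵢ⁻¹ + wⱼ⁻¹)⁻¹, which is a sum of linear functions and harmonic means of pairs, hence concave. -/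
theorem harm_ineq (p q r s a b : ℝ) (hp : 0 < p) (hq : 0 < q) (hr : 0 < r) (hs : 0 < s)
    (ha : 0 ≤ a) (hb : 0 ≤ b) (hab : a + b = 1) :
    a * (p⁻¹ + q⁻¹)⁻¹ + b * (r⁻¹ + s⁻¹)⁻¹ ≤ ((a*p + b*r)⁻¹ + (a*q + b*s)⁻¹)⁻¹ := by
  have key : ∀ x y : ℝ, 0 < x → 0 < y → 0 < a*x+b*y := by
    intro x y hx hy
    rcases ha.eq_or_lt with h|h
    · have hb1 : b = 1 := by linarith
      simp [← h, hb1, hy]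
    · nlinarith [mul_nonneg hb hy.le]
  have hP := key p r hp hr
  have hQ := key q s hq hs
  rw [inv_add_inv hp.ne' hq.ne', inv_add_inv hr.ne' hs.ne', inv_add_inv hP.ne' hQ.ne',
    inv_div, inv_div, inv_div, ← mul_div_assoc, ← mul_div_assoc,
    div_add_div _ _ (by positivity) (by positivity), div_le_div_iff₀ (by positivity) (by positivity)]
  nlinarith [mul_nonneg (mul_nonneg ha hb) (sq_nonneg (p*s - q*r)), mul_pos hp hq, mul_pos hr hs,
    mul_nonneg ha hb, mul_pos (mul_pos hp hq) (mul_pos hr hs)]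

/-- inverse-concavity of the two-harmonic mean on the face {z₁ = 0}:
with F the two-harmonic mean on Fin (m+1) (so n = m+1 ≥ 3), the function
F_*(w) = F(0, 1/w₂, …, 1/wₙ)⁻¹ equals Σᵢ wᵢ + Σ_{i<j} (wᵢ⁻¹+wⱼ⁻¹)⁻¹ on the positive cone,
and is concave there. -/
theorem stmt_11 (m : ℕ) (hm : 2 ≤ m)
    (F : (Fin (m + 1) → ℝ) → ℝ)
    (hF : F = fun z => (∑ p ∈ Finset.univ.filter
        (fun p : Fin (m + 1) × Fin (m + 1) => p.1 < p.2), (z p.1 + z p.2)⁻¹)⁻¹)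
    (Fstar : (Fin m → ℝ) → ℝ)
    (hFstar : Fstar = fun w => (F (Fin.cons 0 (fun i => (w i)⁻¹)))⁻¹) :
    (∀ w : Fin m → ℝ, (∀ i, 0 < w i) →
      Fstar w = (∑ i, w i) + ∑ p ∈ Finset.univ.filter
        (fun p : Fin m × Fin m => p.1 < p.2), ((w p.1)⁻¹ + (w p.2)⁻¹)⁻¹) ∧
    ConcaveOn ℝ {w : Fin m → ℝ | ∀ i, 0 < w i} Fstar := by
  have hid : ∀ w : Fin m → ℝ,
      Fstar w
      = (∑ i, w i) + ∑ p ∈ Finset.univ.filter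
        (fun p : Fin m × Fin m => p.1 < p.2), ((w p.1)⁻¹ + (w p.2)⁻¹)⁻¹ := by
    intro w
    rw [hFstar, hF]
    simp only [inv_inv]
    rw [Finset.sum_filter, Finset.sum_filter, Fintype.sum_prod_type, Fintype.sum_prod_type]
    rw [Fin.sum_univ_succ]
    congr 1
    · rw [Fin.sum_univ_succ]
      simp [Fin.succ_pos]
    · apply Finset.sum_congr rfl
      intro i _
      rw [Fin.sum_univ_succ]
      simp [Fin.succ_lt_succ_iff]
  have hS : Convex ℝ {w : Fin m → ℝ | ∀ i, 0 < w i} := by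
    have : {w : Fin m → ℝ | ∀ i, 0 < w i} = Set.pi Set.univ (fun _ => Set.Ioi (0:ℝ)) := by
      ext w; simp [Set.mem_pi]
    rw [this]
    exact convex_pi fun i _ => convex_Ioi 0
  refine ⟨fun w _ => hid w, hS, ?_⟩
  intro x hx y hy a b ha hb hab
  have hxy : a • x + b • y ∈ {w : Fin m → ℝ | ∀ i, 0 < w i} := hS hx hy ha hb hab
  rw [hid, hid, hid]
  have happ : ∀ i, (a • x + b • y) i = a * x i + b * y i := fun i => rfl
  simp only [happ]
  have h1 : (∑ i, (a * x i + b * y i)) = a * ∑ i, x i + b * ∑ i, y i := by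
    rw [Finset.sum_add_distrib, Finset.mul_sum, Finset.mul_sum]
  have h2 : a * ∑ p ∈ Finset.univ.filter (fun p : Fin m × Fin m => p.1 < p.2),
        ((x p.1)⁻¹ + (x p.2)⁻¹)⁻¹
      + b * ∑ p ∈ Finset.univ.filter (fun p : Fin m × Fin m => p.1 < p.2),
        ((y p.1)⁻¹ + (y p.2)⁻¹)⁻¹
      ≤ ∑ p ∈ Finset.univ.filter (fun p : Fin m × Fin m => p.1 < p.2),
        ((a * x p.1 + b * y p.1)⁻¹ + (a * x p.2 + b * y p.2)⁻¹)⁻¹ := by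
    rw [Finset.mul_sum, Finset.mul_sum, ← Finset.sum_add_distrib]
    apply Finset.sum_le_sum
    intro p _
    exact harm_ineq _ _ _ _ _ _ (hx p.1) (hx p.2) (hy p.1) (hy p.2) ha hb hab
  have := h2
  simp only [smul_eq_mul]
  linarith [h2, h1.ge, h1.le]
end

section
/- Let g : ℝ → ℝ be continuous with g(h) > 0 for all large h and g(h) = O(√h) as h → ∞, and fix τ ∈ (0,1). Then there exists a sequence h_m → ∞ such that g(h_m) ≤ 2·τ^{−1/2}·g(τ·h_m) for all m. -/
/-!
If the inequality failed for all large `h`, then `g (τ h) < (√τ / 2) g h` eventually, and iterating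
along `h / τ ^ k` gives `(2 / √τ) ^ k g h ≤ g (h / τ ^ k) ≤ C √h / √τ ^ k`, i.e. `2 ^ k g h ≤ C √h`
for every `k`, which is absurd since `g h > 0`.
-/

open Filter

theorem pow_mul_le_of_forall_mul_le {K : Type*} [Field K] [LinearOrder K] [IsStrictOrderedRing K]
    {g : K → K} {a τ M x : K} (ha : 0 ≤ a) (hτ₀ : 0 < τ) (hτ₁ : τ ≤ 1) (hx : M ≤ x)
    (hx₀ : 0 ≤ x) (hstep : ∀ y ≥ M, a * g (τ * y) ≤ g y) (k : ℕ) :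
    a ^ k * g x ≤ g (x / τ ^ k) := by
  induction k with
  | zero => simp
  | succ k ih =>
    have hge : M ≤ x / τ ^ (k + 1) :=
      hx.trans (le_div_self hx₀ (pow_pos hτ₀ _) (pow_le_one₀ hτ₀.le hτ₁))
    have hshift : τ * (x / τ ^ (k + 1)) = x / τ ^ k := by
      field_simp
      ring
    calc a ^ (k + 1) * g x = a * (a ^ k * g x) := by ring
      _ ≤ a * g (x / τ ^ k) := mul_le_mul_of_nonneg_left ih ha
      _ ≤ g (x / τ ^ (k + 1)) := hshift ▸ hstep _ hge

theorem frequently_le_two_div_sqrt_mul {g : ℝ → ℝ} {C τ : ℝ} (hτ₀ : 0 < τ) (hτ₁ : τ ≤ 1)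
    (hpos : ∀ᶠ h in atTop, 0 < g h) (hO : ∀ᶠ h in atTop, g h ≤ C * √h) :
    ∃ᶠ h in atTop, g h ≤ 2 / √τ * g (τ * h) := by
  by_contra hfreq
  obtain ⟨M, hM⟩ := eventually_atTop.1
    (((not_frequently.1 hfreq).and (hpos.and hO)).and (eventually_ge_atTop 0))
  have hM₀ : 0 ≤ M := (hM M le_rfl).2
  have hgM : 0 < g M := (hM M le_rfl).1.2.1
  have hstep : ∀ y ≥ M, 2 / √τ * g (τ * y) ≤ g y := fun y hy ↦ (not_le.1 (hM y hy).1.1).le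
  have hbigO : ∀ y ≥ M, g y ≤ C * √y := fun y hy ↦ (hM y hy).1.2.2
  have hs : 0 < √τ := Real.sqrt_pos.2 hτ₀
  have hbound (k : ℕ) : 2 ^ k * g M ≤ C * √M := by
    have hge : M ≤ M / τ ^ k := le_div_self hM₀ (pow_pos hτ₀ _) (pow_le_one₀ hτ₀.le hτ₁)
    have hiter := pow_mul_le_of_forall_mul_le (by positivity) hτ₀ hτ₁ le_rfl hM₀ hstep k
    have hsqrt_pow : √(τ ^ k) = √τ ^ k := by
      rw [Real.sqrt_eq_iff_eq_sq (pow_nonneg hτ₀.le k) (pow_nonneg hs.le k), ← pow_mul, mul_comm,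
        pow_mul, Real.sq_sqrt hτ₀.le]
    calc 2 ^ k * g M = √τ ^ k * ((2 / √τ) ^ k * g M) := by
          rw [← mul_assoc, ← mul_pow, mul_div_cancel₀ _ hs.ne']
      _ ≤ √τ ^ k * (C * √(M / τ ^ k)) :=
          mul_le_mul_of_nonneg_left (hiter.trans (hbigO _ hge)) (by positivity)
      _ = C * √M := by
        rw [Real.sqrt_div hM₀, hsqrt_pow]
        field_simp
  obtain ⟨k, hk⟩ := pow_unbounded_of_one_lt (C * √M / g M) one_lt_two
  exact (hbound k).not_gt ((div_lt_iff₀ hgM).1 hk)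

theorem stmt_19_general (g : ℝ → ℝ)
    (hpos : ∃ h₂ : ℝ, ∀ h ≥ h₂, 0 < g h)
    (hO : ∃ C > (0:ℝ), ∃ h₃ : ℝ, ∀ h ≥ h₃, g h ≤ C * Real.sqrt h)
    (τ : ℝ) (hτ : τ ∈ Set.Ioo (0:ℝ) 1) :
    ∃ hm : ℕ → ℝ, Filter.Tendsto hm Filter.atTop Filter.atTop ∧
      ∀ m, g (hm m) ≤ 2 / Real.sqrt τ * g (τ * hm m) := by
  obtain ⟨C, -, hC⟩ := hO
  exact exists_seq_forall_of_frequently <| frequently_le_two_div_sqrt_mul hτ.1 hτ.2.le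
    (eventually_atTop.2 hpos) (eventually_atTop.2 hC)

/-- iteration lemma: if g is continuous, eventually positive, and
g(h) = O(√h) as h → ∞, then for any τ ∈ (0,1) there is a sequence h_m → ∞ with
g(h_m) ≤ 2·τ^{−1/2}·g(τ·h_m) for all m. -/
theorem stmt_19 (g : ℝ → ℝ) (hg : Continuous g)
    (hpos : ∃ h₂ : ℝ, ∀ h ≥ h₂, 0 < g h)
    (hO : ∃ C > (0:ℝ), ∃ h₃ : ℝ, ∀ h ≥ h₃, g h ≤ C * Real.sqrt h)
    (τ : ℝ) (hτ : τ ∈ Set.Ioo (0:ℝ) 1) :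
    ∃ hm : ℕ → ℝ, Filter.Tendsto hm Filter.atTop Filter.atTop ∧
      ∀ m, g (hm m) ≤ 2 / Real.sqrt τ * g (τ * hm m) :=
  stmt_19_general g hpos hO τ hτ
end
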